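/- An element m of the left 𝕆-module 𝕆 (with action given by octonion multiplication) is associative, i.e., (pq)m = p(qm) for all p,q ∈ 𝕆, if and only if m is a real scalar multiple of 1. -/

import Mathlib

noncomputable section

open Quaternion

/-- The octonions, via the Cayley–Dickson construction on the quaternions. -/
def Octonion : Type := ℍ[ℝ] × ℍ[ℝ]

namespace Octonion

instance : AddCommGroup Octonion := inferInstanceAs (AddCommGroup (ℍ[ℝ] × ℍ[ℝ]))
instance : Module ℝ Octonion := inferInstanceAs (Module ℝ (ℍ[ℝ] × ℍ[ℝ]))

instance : One Octonion := ⟨((1 : ℍ[ℝ]), (0 : ℍ[ℝ]))⟩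
instance : Mul Octonion :=
  ⟨fun x y => (x.1 * y.1 - star y.2 * x.2, y.2 * x.1 + x.2 * star y.1)⟩
/-- Octonionic conjugation. -/
instance : Star Octonion := ⟨fun x => (star x.1, -x.2)⟩

/-- The associator `[a,b,c] = (ab)c - a(bc)`. -/
def assoc (a b c : Octonion) : Octonion := a * b * c - a * (b * c)

/-- The standard imaginary units `e 0 = e₁, …, e 6 = e₇`. -/
def e : Fin 7 → Octonion
  | 0 => ((⟨0,1,0,0⟩ : ℍ[ℝ]), 0)
  | 1 => ((⟨0,0,1,0⟩ : ℍ[ℝ]), 0)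
  | 2 => ((⟨0,0,0,1⟩ : ℍ[ℝ]), 0)
  | 3 => (0, (1 : ℍ[ℝ]))
  | 4 => (0, (⟨0,1,0,0⟩ : ℍ[ℝ]))
  | 5 => (0, (⟨0,0,1,0⟩ : ℍ[ℝ]))
  | 6 => (0, (⟨0,0,0,1⟩ : ℍ[ℝ]))

end Octonion

/-- A left `𝕆`-module: a real vector space with an `ℝ`-bilinear octonion action
satisfying `1 • m = m` and the alternating rule. -/
structure LeftOModule (M : Type) [AddCommGroup M] [Module ℝ M] where
  smul : Octonion →ₗ[ℝ] M →ₗ[ℝ] M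
  one_smul : ∀ m : M, smul 1 m = m
  alt : ∀ (p q : Octonion) (m : M),
    smul (p * q) m - smul p (smul q m) = -(smul (q * p) m - smul q (smul p m))

/-- An `𝕆`-bimodule: compatible left and right `𝕆`-module structures with
`[p,q,m] = [q,m,p] = [m,p,q]`.  Here `l p m` is `p * m` and `r p m` is `m * p`. -/
structure OBimodule (M : Type) [AddCommGroup M] [Module ℝ M] where
  l : Octonion →ₗ[ℝ] M →ₗ[ℝ] M
  r : Octonion →ₗ[ℝ] M →ₗ[ℝ] M
  one_l : ∀ m : M, l 1 m = m
  one_r : ∀ m : M, r 1 m = m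
  /-- left alternating rule `[p,q,m] = -[q,p,m]` -/
  alt_l : ∀ (p q : Octonion) (m : M),
    l (p * q) m - l p (l q m) = -(l (q * p) m - l q (l p m))
  /-- right alternating rule `[m,p,q] = -[m,q,p]` -/
  alt_r : ∀ (p q : Octonion) (m : M),
    r q (r p m) - r (p * q) m = -(r p (r q m) - r (q * p) m)
  /-- `[p,q,m] = [q,m,p]` -/
  comp_lm : ∀ (p q : Octonion) (m : M),
    l (p * q) m - l p (l q m) = r p (l q m) - l q (r p m)
  /-- `[p,q,m] = [m,p,q]` -/
  comp_rm : ∀ (p q : Octonion) (m : M),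
    l (p * q) m - l p (l q m) = r q (r p m) - r (p * q) m

/-!
Write `m = a + bℓ` in the Cayley–Dickson decomposition `𝕆 = ℍ ⊕ ℍℓ`. For quaternions `u, v`,
the `ℓ`-component of `(uv)m = u(vm)` reads `b(uv) = b(vu)`; since `ℍ` is a noncommutative
division ring, `b = 0`. The `ℓ`-component of `(ℓu)m = ℓ(um)` is the conjugate of `ua = au`,
so `a` lies in the centre `ℝ` of `ℍ`. Conversely, the multiplication is `ℝ`-bilinear and
`1` is a unit, so real multiples of `1` associate with everything.
-/

lemma Quaternion.eq_coe_re_of_forall_commute {a : ℍ[ℝ]} (h : ∀ u : ℍ[ℝ], Commute a u) :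
    a = a.re := by
  -- expanded for a general `u` first: the `Quaternion.*_mul` simp lemmas do not fire on
  -- products with an anonymous-constructor literal
  have hJ (u : ℍ[ℝ]) : (a * u).imJ = (u * a).imJ := by rw [(h u).eq]
  have hK (u : ℍ[ℝ]) : (a * u).imK = (u * a).imK := by rw [(h u).eq]
  simp only [Quaternion.imJ_mul, Quaternion.imK_mul] at hJ hK
  have hiJ := hJ ⟨0, 1, 0, 0⟩
  have hiK := hK ⟨0, 1, 0, 0⟩
  have hjK := hK ⟨0, 0, 1, 0⟩
  simp only [mul_zero, mul_one, zero_mul, one_mul, add_zero, zero_add, sub_zero, zero_sub]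
    at hiJ hiK hjK
  ext <;> simp <;> linarith

lemma Quaternion.exists_mul_ne_mul : ∃ u v : ℍ[ℝ], u * v ≠ v * u := by
  by_contra! h
  have hi := congrArg (fun x : ℍ[ℝ] => x.imI)
    (Quaternion.eq_coe_re_of_forall_commute (a := ⟨0, 1, 0, 0⟩) (h _))
  simp at hi

lemma eq_zero_of_forall_mul_mul_comm {D : Type*} [Ring D] [NoZeroDivisors D]
    (hD : ∃ u v : D, u * v ≠ v * u) {b : D} (h : ∀ u v : D, b * (u * v) = b * (v * u)) :
    b = 0 := by
  obtain ⟨u, v, huv⟩ := hD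
  by_contra hb
  exact huv (mul_left_cancel₀ hb (h u v))

namespace Octonion

@[simp] lemma fst_mul (x y : Octonion) : (x * y).1 = x.1 * y.1 - star y.2 * x.2 := rfl
@[simp] lemma snd_mul (x y : Octonion) : (x * y).2 = y.2 * x.1 + x.2 * star y.1 := rfl
@[simp] lemma fst_smul (r : ℝ) (x : Octonion) : (r • x).1 = r • x.1 := rfl
@[simp] lemma snd_smul (r : ℝ) (x : Octonion) : (r • x).2 = r • x.2 := rfl
@[simp] lemma fst_one : (1 : Octonion).1 = 1 := rfl
@[simp] lemma snd_one : (1 : Octonion).2 = 0 := rfl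

@[ext] lemma ext {x y : Octonion} (h₁ : x.1 = y.1) (h₂ : x.2 = y.2) : x = y := Prod.ext h₁ h₂

def ofQuaternion (a : ℍ[ℝ]) : Octonion := (a, 0)

@[simp] lemma fst_ofQuaternion (a : ℍ[ℝ]) : (ofQuaternion a).1 = a := rfl
@[simp] lemma snd_ofQuaternion (a : ℍ[ℝ]) : (ofQuaternion a).2 = 0 := rfl

lemma smul_one_eq_ofQuaternion (r : ℝ) : r • (1 : Octonion) = ofQuaternion r := by
  ext <;> simp

lemma mul_smul_right (r : ℝ) (x y : Octonion) : x * (r • y) = r • (x * y) := by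
  ext <;> simp [smul_sub, smul_add]

lemma mul_smul_one (x : Octonion) (r : ℝ) : x * (r • 1) = r • x := by
  ext <;> simp

lemma snd_eq_zero_of_forall_assoc {m : Octonion}
    (h : ∀ p q : Octonion, p * q * m = p * (q * m)) : m.2 = 0 := by
  refine eq_zero_of_forall_mul_mul_comm Quaternion.exists_mul_ne_mul fun u v => ?_
  have key := congrArg Prod.snd (h (ofQuaternion u) (ofQuaternion v))
  simp only [snd_mul, fst_mul, fst_ofQuaternion, snd_ofQuaternion] at key
  simpa [mul_assoc] using key

lemma commute_fst_of_forall_assoc {m : Octonion}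
    (h : ∀ p q : Octonion, p * q * m = p * (q * m)) (u : ℍ[ℝ]) : Commute m.1 u := by
  have key := congrArg Prod.snd (h (e 3) (ofQuaternion u))
  simp only [snd_mul, fst_mul, fst_ofQuaternion, snd_ofQuaternion, show (e 3).1 = 0 from rfl,
    show (e 3).2 = 1 from rfl, star_zero, zero_mul, mul_zero, mul_one, one_mul, sub_self,
    sub_zero, zero_add, add_zero] at key
  exact star_injective (by rwa [star_mul])

end Octonion

/-- In the left `𝕆`-module `𝕆`, an element is associative iff it is a real
multiple of `1`. -/
theorem assoc_of_O_self (m : Octonion) :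
    (∀ p q : Octonion, (p * q) * m = p * (q * m)) ↔ ∃ r : ℝ, m = r • (1 : Octonion) := by
  refine ⟨fun h => ⟨m.1.re, ?_⟩, ?_⟩
  · rw [Octonion.smul_one_eq_ofQuaternion]
    exact Octonion.ext
      (Quaternion.eq_coe_re_of_forall_commute (Octonion.commute_fst_of_forall_assoc h))
      (Octonion.snd_eq_zero_of_forall_assoc h)
  · rintro ⟨r, rfl⟩ p q
    rw [Octonion.mul_smul_one, Octonion.mul_smul_one, Octonion.mul_smul_right]
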